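/- arXiv:2312.16775 — 12 statements merged into one kernel-verified Lean document; each statement's English description precedes it below -/
import Mathlib

section
/- Under RSI with constant μ > 0, gradient descent with constant step size t = μ/L² satisfies dist²(x_{k+1}, S) ≤ (1 − μ²/L²)·dist²(x_k, S) for each iteration. -/
open Metric Set Filter

local notation "⟪" x ", " y "⟫_ℝ" => @inner ℝ _ _ x y

noncomputable section

abbrev En (n : ℕ) := EuclideanSpace ℝ (Fin n)

def frechetSubdiff {n : ℕ} (f : En n → ℝ) (x : En n) : Set (En n) :=
  {s | ∀ ε > 0, ∀ᶠ y in nhds x, f x + ⟪s, y - x⟫_ℝ - ε * ‖y - x‖ ≤ f y}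

def convexSubdiff {n : ℕ} (f : En n → ℝ) (x : En n) : Set (En n) :=
  {g | ∀ y, f x + ⟪g, y - x⟫_ℝ ≤ f y}

/-! The gradient vanishes on `S`, so `L`-smoothness bounds `‖∇f(x)‖` by `L · dist(x, S)` with
`Π_S(x)` as the comparison point. With `u = x - Π_S(x)` and `g = ∇f(x)` this and the restricted
secant inequality give `‖u - t g‖² = ‖u‖² - 2t⟪g, u⟫ + t²‖g‖² ≤ (1 - 2tμ + t²L²)‖u‖²`, and
`t = μ/L²` minimises the factor, to `1 - μ²/L²`. Finally `dist(x_{k+1}, S) ≤ ‖x_{k+1} - Π_S(x_k)‖`. -/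

theorem IsLocalMin.hasGradientAt_eq_zero {E : Type*} [NormedAddCommGroup E]
    [InnerProductSpace ℝ E] [CompleteSpace E] {f : E → ℝ} {g a : E}
    (hmin : IsLocalMin f a) (hf : HasGradientAt f g a) : g = 0 :=
  (InnerProductSpace.toDual ℝ E).map_eq_zero_iff.mp (hmin.hasFDerivAt_eq_zero hf.hasFDerivAt)

theorem norm_sub_smul_sq_le_of_inner_ge {E : Type*} [NormedAddCommGroup E]
    [InnerProductSpace ℝ E] {g u : E} {μ L : ℝ} (hμ : 0 ≤ μ)
    (hsec : μ * ‖u‖ ^ 2 ≤ ⟪g, u⟫_ℝ) (hg : ‖g‖ ≤ L * ‖u‖) :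
    ‖u - (μ / L ^ 2) • g‖ ^ 2 ≤ (1 - μ ^ 2 / L ^ 2) * ‖u‖ ^ 2 := by
  set t := μ / L ^ 2
  have ht : 0 ≤ t := by positivity
  have hg_sq : ‖g‖ ^ 2 ≤ L ^ 2 * ‖u‖ ^ 2 := by
    rw [← mul_pow]; exact pow_le_pow_left₀ (norm_nonneg g) hg 2
  have htμ : t * μ = μ ^ 2 / L ^ 2 := by ring
  have htL : t ^ 2 * L ^ 2 = μ ^ 2 / L ^ 2 := by
    rcases eq_or_ne L 0 with rfl | hL
    · simp [t]
    · simp only [t]; field_simp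
  calc ‖u - t • g‖ ^ 2 = ‖u‖ ^ 2 - 2 * t * ⟪g, u⟫_ℝ + t ^ 2 * ‖g‖ ^ 2 := by
        rw [norm_sub_sq_real, real_inner_smul_right, norm_smul, Real.norm_of_nonneg ht,
          real_inner_comm]
        ring
    _ ≤ ‖u‖ ^ 2 - 2 * t * (μ * ‖u‖ ^ 2) + t ^ 2 * (L ^ 2 * ‖u‖ ^ 2) := by
        gcongr
    _ = (1 - μ ^ 2 / L ^ 2) * ‖u‖ ^ 2 := by
        linear_combination (-2 * ‖u‖ ^ 2) * htμ + ‖u‖ ^ 2 * htL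

theorem gd_linear_iterates_under_rsi_general {n : ℕ} (f : En n → ℝ) (f' : En n → En n)
    (L μ : ℝ) (hμ : 0 < μ)
    (hgrad : ∀ x, HasGradientAt f (f' x) x)
    (hlip : ∀ x y, ‖f' x - f' y‖ ≤ L * ‖x - y‖)
    (S : Set (En n)) (hS : S = {x | ∀ y, f x ≤ f y})
    (p : En n → En n) (hpS : ∀ x, p x ∈ S) (hpd : ∀ x, ‖x - p x‖ = infDist x S)
    (hRSI : ∀ x, μ * (infDist x S) ^ 2 ≤ ⟪f' x, x - p x⟫_ℝ)
    (x : ℕ → En n) (hiter : ∀ k, x (k + 1) = x k - (μ / L ^ 2) • f' (x k)) :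
    ∀ k, (infDist (x (k + 1)) S) ^ 2 ≤ (1 - μ ^ 2 / L ^ 2) * (infDist (x k) S) ^ 2 := by
  intro k
  have hmin : IsLocalMin f (p (x k)) := .of_forall (by simpa [hS] using hpS (x k))
  have hgrad_zero : f' (p (x k)) = 0 := hmin.hasGradientAt_eq_zero (hgrad _)
  have hgrad_le : ‖f' (x k)‖ ≤ L * ‖x k - p (x k)‖ := by
    simpa [hgrad_zero] using hlip (x k) (p (x k))
  have hstep : x (k + 1) - p (x k) = (x k - p (x k)) - (μ / L ^ 2) • f' (x k) := by
    rw [hiter]; abel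
  have hdist : infDist (x (k + 1)) S ≤ ‖x (k + 1) - p (x k)‖ := by
    simpa [dist_eq_norm] using infDist_le_dist_of_mem (hpS (x k))
  calc infDist (x (k + 1)) S ^ 2 ≤ ‖x (k + 1) - p (x k)‖ ^ 2 :=
        pow_le_pow_left₀ infDist_nonneg hdist 2
    _ ≤ (1 - μ ^ 2 / L ^ 2) * ‖x k - p (x k)‖ ^ 2 := by
        rw [hstep]
        exact norm_sub_smul_sq_le_of_inner_ge hμ.le (hpd (x k) ▸ hRSI (x k)) hgrad_le
    _ = (1 - μ ^ 2 / L ^ 2) * infDist (x k) S ^ 2 := by rw [hpd]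

/-- Under RSI with constant μ > 0, gradient descent with constant step
size t = μ/L² satisfies dist²(x_{k+1},S) ≤ (1 − μ²/L²)·dist²(x_k,S). -/
theorem gd_linear_iterates_under_rsi {n : ℕ} (f : En n → ℝ) (f' : En n → En n)
    (L μ : ℝ) (hL : 0 < L) (hμ : 0 < μ) (hμL : μ ≤ L)
    (hgrad : ∀ x, HasGradientAt f (f' x) x)
    (hlip : ∀ x y, ‖f' x - f' y‖ ≤ L * ‖x - y‖)
    (S : Set (En n)) (hS : S = {x | ∀ y, f x ≤ f y}) (hne : S.Nonempty)
    (p : En n → En n) (hpS : ∀ x, p x ∈ S) (hpd : ∀ x, ‖x - p x‖ = infDist x S)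
    (hRSI : ∀ x, μ * (infDist x S) ^ 2 ≤ ⟪f' x, x - p x⟫_ℝ)
    (x : ℕ → En n) (hiter : ∀ k, x (k + 1) = x k - (μ / L ^ 2) • f' (x k)) :
    ∀ k, (infDist (x (k + 1)) S) ^ 2 ≤ (1 - μ ^ 2 / L ^ 2) * (infDist (x k) S) ^ 2 :=
  gd_linear_iterates_under_rsi_general f f' L μ hμ hgrad hlip S hS p hpS hpd hRSI x hiter
end
end

section
/- If f is L-smooth and satisfies the PL inequality (1/2)‖∇f(x)‖² ≥ β(f(x) − f⋆) for all x with β > 0, then gradient descent with step size 0 < t < 2/L satisfies f(x_{k+1}) − f⋆ ≤ (1 + (−2t + Lt²)β)(f(x_k) − f⋆). -/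
/-! The descent lemma `f y ≤ f x + ⟪∇f x, y - x⟫ + L/2 ‖y - x‖²` turns one gradient step into the
decrease `f x⁺ ≤ f x - t (1 - L t / 2) ‖∇f x‖²`, and the PL inequality `‖∇f x‖² ≥ 2β (f x - f⋆)`
converts that decrease into a contraction of the gap `f x - f⋆` by `1 - 2β t (1 - L t / 2)`. -/

open Metric Set Filter

local notation "⟪" x ", " y "⟫_ℝ" => @inner ℝ _ _ x y

noncomputable section

section LipschitzGradient

variable {E : Type*} [NormedAddCommGroup E] [InnerProductSpace ℝ E]
  {f : E → ℝ} {f' : E → E} {L : ℝ}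

theorem inner_sub_inner_le_of_lipschitz (hlip : ∀ x y, ‖f' x - f' y‖ ≤ L * ‖x - y‖)
    (x v : E) {s : ℝ} (hs : 0 ≤ s) :
    ⟪f' (x + s • v), v⟫_ℝ - ⟪f' x, v⟫_ℝ ≤ L * s * ‖v‖ ^ 2 :=
  calc ⟪f' (x + s • v), v⟫_ℝ - ⟪f' x, v⟫_ℝ
      = ⟪f' (x + s • v) - f' x, v⟫_ℝ := (inner_sub_left _ _ _).symm
    _ ≤ ‖f' (x + s • v) - f' x‖ * ‖v‖ := real_inner_le_norm _ _
    _ ≤ L * ‖(x + s • v) - x‖ * ‖v‖ := by gcongr; exact hlip _ _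
    _ = L * s * ‖v‖ ^ 2 := by
      rw [add_sub_cancel_left, norm_smul, Real.norm_of_nonneg hs]; ring

variable [CompleteSpace E]

theorem HasGradientAt.hasDerivAt_comp_add_smul {g x v : E} {s : ℝ}
    (h : HasGradientAt f g (x + s • v)) :
    HasDerivAt (fun s : ℝ => f (x + s • v)) ⟪g, v⟫_ℝ s := by
  have hline : HasDerivAt (fun s : ℝ => x + s • v) v s := by
    simpa using ((hasDerivAt_id s).smul_const v).const_add x
  simpa [Function.comp_def] using h.hasFDerivAt.comp_hasDerivAt s hline

theorem descent_lemma (hgrad : ∀ x, HasGradientAt f (f' x) x)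
    (hlip : ∀ x y, ‖f' x - f' y‖ ≤ L * ‖x - y‖) (x y : E) :
    f y ≤ f x + ⟪f' x, y - x⟫_ℝ + L / 2 * ‖y - x‖ ^ 2 := by
  set v := y - x
  -- the gap between `f` and its quadratic upper model along the segment only decreases
  let g : ℝ → ℝ := fun s => f (x + s • v) - s * ⟪f' x, v⟫_ℝ - L / 2 * s ^ 2 * ‖v‖ ^ 2
  have hderiv (s : ℝ) :
      HasDerivAt g (⟪f' (x + s • v), v⟫_ℝ - ⟪f' x, v⟫_ℝ - L * s * ‖v‖ ^ 2) s := by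
    have hlin := (hasDerivAt_id s).mul_const ⟪f' x, v⟫_ℝ
    have hquad := ((hasDerivAt_pow 2 s).const_mul (L / 2)).mul_const (‖v‖ ^ 2)
    refine (((hgrad _).hasDerivAt_comp_add_smul.sub hlin).sub hquad).congr_deriv ?_
    simp only [one_mul, Nat.cast_ofNat, Nat.add_one_sub_one, pow_one]
    ring
  have hanti : AntitoneOn g (Icc 0 1) := by
    refine antitoneOn_of_hasDerivWithinAt_nonpos (convex_Icc 0 1)
      (fun s _ => (hderiv s).continuousAt.continuousWithinAt)
      (fun s _ => (hderiv s).hasDerivWithinAt) fun s hs => ?_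
    rw [interior_Icc] at hs
    linarith [inner_sub_inner_le_of_lipschitz hlip x v hs.1.le]
  have := hanti (left_mem_Icc.2 zero_le_one) (right_mem_Icc.2 zero_le_one) zero_le_one
  simp only [g, v, zero_smul, add_zero, one_smul, add_sub_cancel] at this
  linarith

theorem gradient_step_le (hgrad : ∀ x, HasGradientAt f (f' x) x)
    (hlip : ∀ x y, ‖f' x - f' y‖ ≤ L * ‖x - y‖) (x : E) (t : ℝ) :
    f (x - t • f' x) ≤ f x - t * (1 - L * t / 2) * ‖f' x‖ ^ 2 := by
  have hdesc := descent_lemma hgrad hlip x (x - t • f' x)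
  rw [sub_sub_cancel_left, inner_neg_right, real_inner_smul_right, real_inner_self_eq_norm_sq,
    norm_neg, norm_smul, Real.norm_eq_abs, mul_pow, sq_abs] at hdesc
  linarith

end LipschitzGradient

theorem gd_linear_cost_under_pl_general {n : ℕ} (f : En n → ℝ) (f' : En n → En n)
    (L β fstar t : ℝ)
    (hgrad : ∀ x, HasGradientAt f (f' x) x)
    (hlip : ∀ x y, ‖f' x - f' y‖ ≤ L * ‖x - y‖)
    (hPL : ∀ x, β * (f x - fstar) ≤ (1 / 2) * ‖f' x‖ ^ 2)
    (ht0 : 0 < t) (htL : t < 2 / L)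
    (x : ℕ → En n) (hiter : ∀ k, x (k + 1) = x k - t • f' (x k)) :
    ∀ k, f (x (k + 1)) - fstar ≤ (1 + (-2 * t + L * t ^ 2) * β) * (f (x k) - fstar) := by
  intro k
  have hL : 0 < L := (div_pos_iff_of_pos_left two_pos).1 (ht0.trans htL)
  have hLt : L * t < 2 := (lt_div_iff₀' hL).1 htL
  have hstep : 0 ≤ t * (1 - L * t / 2) := mul_nonneg ht0.le (by linarith)
  have hdecrease := gradient_step_le hgrad hlip (x k) t
  rw [← hiter k] at hdecrease
  linarith [mul_le_mul_of_nonneg_left (hPL (x k)) hstep]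

/-- For L-smooth f satisfying PL, gradient descent with step size
0 < t < 2/L satisfies f(x_{k+1}) − f⋆ ≤ (1 + (−2t + Lt²)β)(f(x_k) − f⋆). -/
theorem gd_linear_cost_under_pl {n : ℕ} (f : En n → ℝ) (f' : En n → En n)
    (L β fstar t : ℝ) (hL : 0 < L) (hβ : 0 < β)
    (hgrad : ∀ x, HasGradientAt f (f' x) x)
    (hlip : ∀ x y, ‖f' x - f' y‖ ≤ L * ‖x - y‖)
    (hlb : ∀ x, fstar ≤ f x) (hmin : ∃ x, f x = fstar)
    (hPL : ∀ x, β * (f x - fstar) ≤ (1 / 2) * ‖f' x‖ ^ 2)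
    (ht0 : 0 < t) (htL : t < 2 / L)
    (x : ℕ → En n) (hiter : ∀ k, x (k + 1) = x k - t • f' (x k)) :
    ∀ k, f (x (k + 1)) - fstar ≤ (1 + (-2 * t + L * t ^ 2) * β) * (f (x k) - fstar) :=
  gd_linear_cost_under_pl_general f f' L β fstar t hgrad hlip hPL ht0 htL x hiter
end
end

section
/- For a proper closed ρ-weakly convex function f with nonempty solution set S, strong convexity over the sublevel set [f ≤ f⋆ + ν] with constant μ_s implies the restricted secant inequality over the same sublevel set with constant μ_r ≥ μ_s. -/
open Metric Set Filter

local notation "⟪" x ", " y "⟫_ℝ" => @inner ℝ _ _ x y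

noncomputable section

/-- For a proper closed ρ-weakly convex f, strong convexity over the
sublevel set [f ≤ f⋆ + ν] with constant μ_s implies RSI there with constant μ_s
(hence with some μ_r ≥ μ_s). -/
theorem sc_implies_rsi {n : ℕ} (f : En n → ℝ) (ρ ν μs fstar : ℝ)
    (hρ : 0 ≤ ρ) (hν : 0 < ν) (hμs : 0 < μs)
    (hlsc : LowerSemicontinuous f)
    (hwc : ConvexOn ℝ Set.univ (fun x => f x + ρ / 2 * ‖x‖ ^ 2))
    (hlb : ∀ y, fstar ≤ f y)
    (S : Set (En n)) (hS : S = {x | f x = fstar}) (hne : S.Nonempty)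
    (p : En n → En n) (hpS : ∀ x, p x ∈ S) (hpd : ∀ x, ‖x - p x‖ = infDist x S)
    (hSC : ∀ x ∈ {z : En n | f z ≤ fstar + ν}, ∀ y ∈ {z : En n | f z ≤ fstar + ν},
      ∀ g ∈ frechetSubdiff f x, f x + ⟪g, y - x⟫_ℝ + μs * ‖y - x‖ ^ 2 ≤ f y) :
    ∀ x ∈ {z : En n | f z ≤ fstar + ν}, ∀ g ∈ frechetSubdiff f x,
      μs * (infDist x S) ^ 2 ≤ ⟪g, x - p x⟫_ℝ := by
  intro x hx g hg
  have hpx : f (p x) = fstar := by have := hpS x; rwa [hS] at this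
  have hpmem : p x ∈ {z : En n | f z ≤ fstar + ν} := by
    simp only [Set.mem_setOf_eq, hpx]; linarith
  have h := hSC x hx (p x) hpmem g hg
  rw [hpx] at h
  have hfx := hlb x
  have hnorm : ‖p x - x‖ = infDist x S := by rw [← hpd x, norm_sub_rev]
  have hinner : ⟪g, p x - x⟫_ℝ = - ⟪g, x - p x⟫_ℝ := by
    rw [← inner_neg_right]; congr 1; abel
  rw [hnorm, hinner] at h
  linarith
end
end

section
/- For a proper closed ρ-weakly convex function, the error bound with constant μ_e > 0 over [f ≤ f⋆ + ν] implies the PL inequality μ_p·(f(x) − f⋆) ≤ dist²(0, ∂̂f(x)) over the same sublevel set, with μ_p = 2/(2μ_e + ρμ_e²). -/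
open Metric Set Filter

local notation "⟪" x ", " y "⟫_ℝ" => @inner ℝ _ _ x y

noncomputable section

open Topology

/-! If `v ∈ ∂̂f(x)` then `v + ρx` is a Fréchet, hence (by convexity) a global, subgradient of
`f + (ρ/2)‖·‖²`; this is the weakly convex subgradient inequality. Applied at a point `y` of `S`
nearest to `x` it gives `f x - f⋆ ≤ ‖v‖ ‖x - y‖ + (ρ/2) ‖x - y‖²`. Taking the infimum over `v` and
inserting the error bound `‖x - y‖ ≤ μ_e dist(0, ∂̂f(x))` yields
`f x - f⋆ ≤ (μ_e + ρ μ_e² / 2) dist²(0, ∂̂f(x))`. -/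

lemma norm_sq_sub_norm_sq_sub_inner {n : ℕ} (x y : En n) :
    ‖y‖ ^ 2 - ‖x‖ ^ 2 - 2 * ⟪x, y - x⟫_ℝ = ‖y - x‖ ^ 2 := by
  rw [norm_sub_sq_real, inner_sub_right, real_inner_comm, real_inner_self_eq_norm_sq]
  ring

lemma ConvexOn.frechetSubdiff_subset_convexSubdiff {n : ℕ} {F : En n → ℝ}
    (hF : ConvexOn ℝ univ F) (x : En n) : frechetSubdiff F x ⊆ convexSubdiff F x := by
  intro v hv y
  have approx : ∀ ε > 0, ⟪v, y - x⟫_ℝ ≤ F y - F x + ε * ‖y - x‖ := by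
    intro ε hε
    have hpath : Tendsto (fun t : ℝ => x + t • (y - x)) (𝓝[>] 0) (𝓝 x) := by
      have : Continuous (fun t : ℝ => x + t • (y - x)) := by fun_prop
      simpa using (this.tendsto 0).mono_left nhdsWithin_le_nhds
    obtain ⟨t, hfrechet, ht0, ht1⟩ :=
      ((hpath.eventually (hv ε hε)).and (Ioo_mem_nhdsGT one_pos)).exists
    have hseg : x + t • (y - x) = (1 - t) • x + t • y := by module
    have hconv := hF.2 (mem_univ x) (mem_univ y) (sub_nonneg.2 ht1.le) ht0.le
      (sub_add_cancel 1 t)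
    rw [add_sub_cancel_left, real_inner_smul_right, norm_smul, Real.norm_of_nonneg ht0.le,
      hseg] at hfrechet
    simp only [smul_eq_mul] at hconv
    have hscaled : t * (⟪v, y - x⟫_ℝ - ε * ‖y - x‖) ≤ t * (F y - F x) := by linarith
    linarith [le_of_mul_le_mul_left hscaled ht0]
  refine le_of_forall_pos_le_add fun δ hδ => ?_
  have hε : 0 < δ / (‖y - x‖ + 1) := by positivity
  have hεδ : δ / (‖y - x‖ + 1) * ‖y - x‖ ≤ δ := by
    rw [div_mul_eq_mul_div, div_le_iff₀ (by positivity)]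
    nlinarith [norm_nonneg (y - x)]
  linarith [approx _ hε]

lemma add_smul_mem_frechetSubdiff_add_sq_norm {n : ℕ} {f : En n → ℝ} {ρ : ℝ} (hρ : 0 ≤ ρ)
    {x v : En n} (hv : v ∈ frechetSubdiff f x) :
    v + ρ • x ∈ frechetSubdiff (fun z => f z + ρ / 2 * ‖z‖ ^ 2) x := by
  intro ε hε
  filter_upwards [hv ε hε] with z hz
  have hsq := norm_sq_sub_norm_sq_sub_inner x z
  rw [inner_add_left, real_inner_smul_left]
  nlinarith [mul_nonneg hρ (sq_nonneg ‖z - x‖)]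

lemma weaklyConvex_subgradient_ineq {n : ℕ} {f : En n → ℝ} {ρ : ℝ} (hρ : 0 ≤ ρ)
    (hwc : ConvexOn ℝ univ (fun x => f x + ρ / 2 * ‖x‖ ^ 2))
    {x v : En n} (hv : v ∈ frechetSubdiff f x) (y : En n) :
    f x + ⟪v, y - x⟫_ℝ - ρ / 2 * ‖y - x‖ ^ 2 ≤ f y := by
  have hconv := hwc.frechetSubdiff_subset_convexSubdiff x
    (add_smul_mem_frechetSubdiff_add_sq_norm hρ hv) y
  have hsq := norm_sq_sub_norm_sq_sub_inner x y
  rw [inner_add_left, real_inner_smul_left] at hconv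
  nlinarith

lemma le_infDist_zero_mul {E : Type*} [SeminormedAddCommGroup E] {s : Set E} {a c : ℝ}
    (hs : s.Nonempty) (hc : 0 ≤ c) (h : ∀ v ∈ s, a ≤ ‖v‖ * c) : a ≤ infDist 0 s * c := by
  rcases hc.eq_or_lt with rfl | hc
  · obtain ⟨v, hv⟩ := hs
    simpa using h v hv
  rw [← div_le_iff₀ hc, le_infDist hs]
  intro v hv
  rw [div_le_iff₀ hc, dist_zero_left]
  exact h v hv

lemma isClosed_setOf_eq_of_forall_le {X : Type*} [TopologicalSpace X] {f : X → ℝ} {m : ℝ}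
    (hf : LowerSemicontinuous f) (hm : ∀ x, m ≤ f x) : IsClosed {x | f x = m} := by
  convert hf.isClosed_preimage m using 1
  ext x
  exact ⟨le_of_eq, fun h => le_antisymm h (hm x)⟩

lemma mul_le_sq_of_le_mul_add_sq {ρ μ g d δ : ℝ} (hρ : 0 ≤ ρ) (hμ : 0 < μ) (hg : 0 ≤ g)
    (hd : 0 ≤ d) (hdg : d ≤ μ * g) (hδ : δ ≤ g * d + ρ / 2 * d ^ 2) :
    2 / (2 * μ + ρ * μ ^ 2) * δ ≤ g ^ 2 := by
  have hD : 0 < 2 * μ + ρ * μ ^ 2 := by positivity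
  rw [div_mul_eq_mul_div, div_le_iff₀ hD]
  have hsq : d ^ 2 ≤ (μ * g) ^ 2 := pow_le_pow_left₀ hd hdg 2
  nlinarith [mul_le_mul_of_nonneg_left hdg hg, mul_le_mul_of_nonneg_left hsq hρ]

theorem eb_implies_pl_general {n : ℕ} (f : En n → ℝ) (ρ ν μe fstar : ℝ)
    (hρ : 0 ≤ ρ) (hμe : 0 < μe)
    (hlsc : LowerSemicontinuous f)
    (hwc : ConvexOn ℝ Set.univ (fun x => f x + ρ / 2 * ‖x‖ ^ 2))
    (hlb : ∀ y, fstar ≤ f y)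
    (S : Set (En n)) (hS : S = {x | f x = fstar}) (hne : S.Nonempty)
    (hEB : ∀ x ∈ {z : En n | f z ≤ fstar + ν},
      infDist x S ≤ μe * infDist (0 : En n) (frechetSubdiff f x)) :
    ∀ x ∈ {z : En n | f z ≤ fstar + ν},
      (2 / (2 * μe + ρ * μe ^ 2)) * (f x - fstar)
        ≤ (infDist (0 : En n) (frechetSubdiff f x)) ^ 2 := by
  intro x hx
  have hSclosed : IsClosed S := hS ▸ isClosed_setOf_eq_of_forall_le hlsc hlb
  obtain ⟨y, hyS, hdist⟩ := hSclosed.exists_infDist_eq_dist hne x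
  have hfy : f y = fstar := by rw [hS] at hyS; exact hyS
  rw [dist_eq_norm] at hdist
  refine mul_le_sq_of_le_mul_add_sq hρ hμe infDist_nonneg (norm_nonneg (x - y))
    (hdist ▸ hEB x hx) ?_
  rcases (frechetSubdiff f x).eq_empty_or_nonempty with hempty | hsub
  · -- `infDist 0 ∅ = 0`, so here the error bound forces `x ∈ S`.
    have hxy : ‖x - y‖ ≤ 0 := by simpa [hempty, hdist] using hEB x hx
    rw [norm_le_zero_iff, sub_eq_zero] at hxy
    simp [hxy, hfy]
  · rw [← sub_le_iff_le_add]
    refine le_infDist_zero_mul hsub (norm_nonneg (x - y)) fun v hv => ?_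
    have hineq := weaklyConvex_subgradient_ineq hρ hwc hv y
    have hcs := real_inner_le_norm v (x - y)
    rw [← neg_sub x y, inner_neg_right, norm_neg] at hineq
    nlinarith

/-- For a proper closed ρ-weakly convex f, the error bound with μ_e > 0
over [f ≤ f⋆ + ν] implies the PL inequality there with μ_p = 2/(2μ_e + ρμ_e²). -/
theorem eb_implies_pl {n : ℕ} (f : En n → ℝ) (ρ ν μe fstar : ℝ)
    (hρ : 0 ≤ ρ) (hν : 0 < ν) (hμe : 0 < μe)
    (hlsc : LowerSemicontinuous f)
    (hwc : ConvexOn ℝ Set.univ (fun x => f x + ρ / 2 * ‖x‖ ^ 2))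
    (hlb : ∀ y, fstar ≤ f y)
    (S : Set (En n)) (hS : S = {x | f x = fstar}) (hne : S.Nonempty)
    (hEB : ∀ x ∈ {z : En n | f z ≤ fstar + ν},
      infDist x S ≤ μe * infDist (0 : En n) (frechetSubdiff f x)) :
    ∀ x ∈ {z : En n | f z ≤ fstar + ν},
      (2 / (2 * μe + ρ * μe ^ 2)) * (f x - fstar)
        ≤ (infDist (0 : En n) (frechetSubdiff f x)) ^ 2 :=
  eb_implies_pl_general f ρ ν μe fstar hρ hμe hlsc hwc hlb S hS hne hEB
end
end

section
/- For a proper closed ρ-weakly convex function satisfying the quadratic growth condition with constant μ_q > ρ/2 over [f ≤ f⋆ + ν], the restricted secant inequality holds over the same sublevel set with constant μ_q − ρ/2. -/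
open Metric Set Filter

local notation "⟪" x ", " y "⟫_ℝ" => @inner ℝ _ _ x y

noncomputable section

lemma frechet_to_convex {n : ℕ} (F : En n → ℝ) (hF : ConvexOn ℝ Set.univ F)
    (x h : En n) (hh : h ∈ frechetSubdiff F x) : ∀ y, F x + ⟪h, y - x⟫_ℝ ≤ F y := by
  intro y
  rcases eq_or_ne y x with rfl | hyx
  · simp
  have hny : 0 < ‖y - x‖ := by
    rw [norm_pos_iff]; exact sub_ne_zero.mpr hyx
  have key : ∀ ε > (0:ℝ), F x + ⟪h, y - x⟫_ℝ ≤ F y + ε := by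
    intro ε hε
    have hε1 : (0:ℝ) < ε / ‖y - x‖ := div_pos hε hny
    obtain ⟨δ, hδ, hball⟩ := Metric.eventually_nhds_iff.mp (hh _ hε1)
    set t : ℝ := min 1 (δ / (2 * ‖y - x‖)) with ht
    have ht0 : 0 < t := lt_min one_pos (div_pos hδ (by positivity))
    have ht1 : t ≤ 1 := min_le_left _ _
    set z : En n := x + t • (y - x) with hz
    have hzx : z - x = t • (y - x) := by simp [hz]
    have hznorm : ‖z - x‖ = t * ‖y - x‖ := by
      rw [hzx, norm_smul, Real.norm_eq_abs, abs_of_pos ht0]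
    have hzball : dist z x < δ := by
      rw [dist_eq_norm, hznorm]
      calc t * ‖y - x‖ ≤ δ / (2 * ‖y - x‖) * ‖y - x‖ := by
            apply mul_le_mul_of_nonneg_right (min_le_right _ _) (le_of_lt hny)
        _ = δ / 2 := by field_simp
        _ < δ := by linarith
    have h1 := hball hzball
    have hcvx := hF.2 (Set.mem_univ x) (Set.mem_univ y)
      (show (0:ℝ) ≤ 1 - t by linarith) ht0.le (by ring)
    have hzc : (1 - t) • x + t • y = z := by
      rw [hz]; module
    rw [hzc] at hcvx
    have hiz : ⟪h, z - x⟫_ℝ = t * ⟪h, y - x⟫_ℝ := by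
      rw [hzx, real_inner_smul_right]
    rw [hiz, hznorm] at h1
    have hεd : ε / ‖y - x‖ * (t * ‖y - x‖) = ε * t := by field_simp
    rw [hεd] at h1
    -- h1 : F x + t * ⟪h,y-x⟫ - ε * t ≤ F z ; hcvx : F z ≤ (1-t) F x + t F y
    have := h1.trans hcvx
    rw [smul_eq_mul, smul_eq_mul] at this
    have h2 : t * (F x + ⟪h, y - x⟫_ℝ) ≤ t * (F y + ε) := by nlinarith
    exact le_of_mul_le_mul_left h2 ht0
  linarith [le_of_forall_pos_le_add key]

/-- For a proper closed ρ-weakly convex f satisfying quadratic growth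
with μ_q > ρ/2 over [f ≤ f⋆ + ν], RSI holds there with constant μ_q − ρ/2. -/
theorem qg_implies_rsi_weakly_convex {n : ℕ} (f : En n → ℝ) (ρ ν μq fstar : ℝ)
    (hρ : 0 ≤ ρ) (hν : 0 < ν) (hμq : ρ / 2 < μq)
    (hlsc : LowerSemicontinuous f)
    (hwc : ConvexOn ℝ Set.univ (fun x => f x + ρ / 2 * ‖x‖ ^ 2))
    (hlb : ∀ y, fstar ≤ f y)
    (S : Set (En n)) (hS : S = {x | f x = fstar}) (hne : S.Nonempty)
    (p : En n → En n) (hpS : ∀ x, p x ∈ S) (hpd : ∀ x, ‖x - p x‖ = infDist x S)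
    (hQG : ∀ x ∈ {z : En n | f z ≤ fstar + ν}, μq * (infDist x S) ^ 2 ≤ f x - fstar) :
    ∀ x ∈ {z : En n | f z ≤ fstar + ν}, ∀ g ∈ frechetSubdiff f x,
      (μq - ρ / 2) * (infDist x S) ^ 2 ≤ ⟪g, x - p x⟫_ℝ := by
  intro x hx g hg
  set F : En n → ℝ := fun y => f y + ρ / 2 * ‖y‖ ^ 2 with hF
  have hgF : (g + ρ • x) ∈ frechetSubdiff F x := by
    intro ε hε
    filter_upwards [hg ε hε] with y hy
    have hexp : ‖y - x‖ ^ 2 = ‖y‖ ^ 2 - 2 * ⟪y, x⟫_ℝ + ‖x‖ ^ 2 := by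
      rw [← real_inner_self_eq_norm_sq, ← real_inner_self_eq_norm_sq,
        ← real_inner_self_eq_norm_sq, inner_sub_sub_self]
      linarith [real_inner_comm y x]
    have hinner : ⟪g + ρ • x, y - x⟫_ℝ
        = ⟪g, y - x⟫_ℝ + ρ * (⟪y, x⟫_ℝ - ‖x‖ ^ 2) := by
      simp only [inner_add_left, real_inner_smul_left, inner_sub_right,
        real_inner_self_eq_norm_sq]
      linear_combination ρ * real_inner_comm y x
    simp only [hF]
    rw [hinner]
    nlinarith [sq_nonneg ‖y - x‖]
  have hkey := frechet_to_convex F hwc x (g + ρ • x) hgF (p x)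
  have hfp : f (p x) = fstar := by
    have := hpS x; rw [hS] at this; exact this
  have hd := hpd x
  have hQGx := hQG x hx
  have hexp : ‖x - p x‖ ^ 2 = ‖x‖ ^ 2 - 2 * ⟪x, p x⟫_ℝ + ‖p x‖ ^ 2 := by
    rw [← real_inner_self_eq_norm_sq, ← real_inner_self_eq_norm_sq,
      ← real_inner_self_eq_norm_sq, inner_sub_sub_self]
    linarith [real_inner_comm x (p x)]
  have hinner : ⟪g + ρ • x, p x - x⟫_ℝ
      = -⟪g, x - p x⟫_ℝ + ρ * (⟪x, p x⟫_ℝ - ‖x‖ ^ 2) := by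
    simp only [inner_add_left, real_inner_smul_left, inner_sub_right,
      real_inner_self_eq_norm_sq]
    ring
  simp only [hF] at hkey
  rw [hinner, hfp] at hkey
  have hd2 : ‖x - p x‖ ^ 2 = (infDist x S) ^ 2 := by rw [hd]
  nlinarith [hkey, hQGx, hexp, hd2]
end
end

section
/- For a proper closed convex function satisfying quadratic growth with constant μ_q > 0 over [f ≤ f⋆ + ν], the restricted secant inequality holds over the same sublevel set with the same constant μ_q. -/
open Metric Set Filter

local notation "⟪" x ", " y "⟫_ℝ" => @inner ℝ _ _ x y

noncomputable section

/-- For a proper closed convex f satisfying quadratic growth with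
μ_q > 0 over [f ≤ f⋆ + ν], RSI holds there with the same constant μ_q. -/
theorem qg_implies_rsi_convex {n : ℕ} (f : En n → ℝ) (ν μq fstar : ℝ)
    (hν : 0 < ν) (hμq : 0 < μq)
    (hlsc : LowerSemicontinuous f)
    (hconv : ConvexOn ℝ Set.univ f)
    (hlb : ∀ y, fstar ≤ f y)
    (S : Set (En n)) (hS : S = {x | f x = fstar}) (hne : S.Nonempty)
    (p : En n → En n) (hpS : ∀ x, p x ∈ S) (hpd : ∀ x, ‖x - p x‖ = infDist x S)
    (hQG : ∀ x ∈ {z : En n | f z ≤ fstar + ν}, μq * (infDist x S) ^ 2 ≤ f x - fstar) :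
    ∀ x ∈ {z : En n | f z ≤ fstar + ν}, ∀ g ∈ convexSubdiff f x,
      μq * (infDist x S) ^ 2 ≤ ⟪g, x - p x⟫_ℝ := by
  intro x hx g hg
  have h1 := hg (p x)
  have hfp : f (p x) = fstar := by have := hpS x; rwa [hS] at this
  have he : p x - x = -(x - p x) := by abel
  rw [he, inner_neg_right, hfp] at h1
  have h2 := hQG x hx
  linarith
end
end

section
/- For a proper closed convex function f and c > 0, the proximal point update x⁺ = prox_{c,f}(x) satisfies 2c(f(x⁺) − f(x⋆)) ≤ ‖x − x⋆‖² − ‖x⁺ − x⋆‖² for every minimizer x⋆ of f. -/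
open Metric Set Filter

local notation "⟪" x ", " y "⟫_ℝ" => @inner ℝ _ _ x y

noncomputable section

/-- One-step improvement of the proximal point update:
2c(f(x⁺) − f(x⋆)) ≤ ‖x − x⋆‖² − ‖x⁺ − x⋆‖². -/
theorem ppm_one_step_improvement {n : ℕ} (f : En n → ℝ) (c : ℝ) (hc : 0 < c)
    (hlsc : LowerSemicontinuous f) (hconv : ConvexOn ℝ Set.univ f)
    (x xplus xstar : En n)
    (hprox : ∀ z, f xplus + 1 / (2 * c) * ‖xplus - x‖ ^ 2
      ≤ f z + 1 / (2 * c) * ‖z - x‖ ^ 2)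
    (hstar : ∀ y, f xstar ≤ f y) :
    2 * c * (f xplus - f xstar) ≤ ‖x - xstar‖ ^ 2 - ‖xplus - xstar‖ ^ 2 := by
  set s : ℝ := ‖xstar - xplus‖ ^ 2 with hs
  have hs0 : 0 ≤ s := by positivity
  -- key inequality for each t ∈ (0,1]
  have key : ∀ t : ℝ, 0 < t → t ≤ 1 →
      f xplus - f xstar ≤ (1/c) * ⟪xplus - x, xstar - xplus⟫_ℝ + t / (2*c) * s := by
    intro t ht ht1
    have ht0 : (0:ℝ) ≤ t := ht.le
    have ht1' : (0:ℝ) ≤ 1 - t := by linarith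
    set z : En n := t • xstar + (1 - t) • xplus with hz
    have hzx : z - x = (xplus - x) + t • (xstar - xplus) := by
      rw [hz]; module
    have hnorm : ‖z - x‖ ^ 2
        = ‖xplus - x‖ ^ 2 + 2 * (t * ⟪xplus - x, xstar - xplus⟫_ℝ) + t^2 * s := by
      rw [hzx, norm_add_sq_real, real_inner_smul_right, norm_smul]
      simp [hs, mul_pow, abs_of_nonneg ht0]
      try ring
    have hfz : f z ≤ t * f xstar + (1 - t) * f xplus :=
      hconv.2 (mem_univ xstar) (mem_univ xplus) ht0 ht1' (by ring)
    have h1 := hprox z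
    rw [hnorm] at h1
    have h2 : t * (f xplus - f xstar)
        ≤ 1/(2*c) * (2 * (t * ⟪xplus - x, xstar - xplus⟫_ℝ) + t^2 * s) := by
      nlinarith [h1, hfz]
    have hcne : c ≠ 0 := ne_of_gt hc
    have heq : 1/(2*c) * (2 * (t * ⟪xplus - x, xstar - xplus⟫_ℝ) + t^2 * s)
        = t * ((1/c) * ⟪xplus - x, xstar - xplus⟫_ℝ + t / (2*c) * s) := by
      field_simp
    rw [heq] at h2
    exact le_of_mul_le_mul_left h2 ht
  -- pass to the limit t → 0
  have hmain : f xplus - f xstar ≤ (1/c) * ⟪xplus - x, xstar - xplus⟫_ℝ := by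
    apply le_of_forall_pos_le_add
    intro ε hε
    rcases eq_or_lt_of_le hs0 with hseq | hspos
    · have := key 1 one_pos le_rfl
      rw [← hseq] at this
      linarith
    · set t : ℝ := min 1 (2 * c * ε / s) with htdef
      have htpos : 0 < t := lt_min one_pos (by positivity)
      have ht1 : t ≤ 1 := min_le_left _ _
      have := key t htpos ht1
      have hts : t / (2*c) * s ≤ ε := by
        have h1 : t ≤ 2 * c * ε / s := min_le_right _ _
        rw [div_mul_eq_mul_div, div_le_iff₀ (by positivity)]
        calc t * s ≤ (2 * c * ε / s) * s := by nlinarith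
        _ = ε * (2 * c) := by field_simp
      linarith
  -- conclude by algebra
  have hexp : ‖x - xstar‖ ^ 2
      = ‖x - xplus‖ ^ 2 + 2 * ⟪x - xplus, xplus - xstar⟫_ℝ + ‖xplus - xstar‖ ^ 2 := by
    have : x - xstar = (x - xplus) + (xplus - xstar) := by abel
    rw [this, norm_add_sq_real]; try ring
  have hinner : ⟪xplus - x, xstar - xplus⟫_ℝ = ⟪x - xplus, xplus - xstar⟫_ℝ := by
    rw [show xplus - x = -(x - xplus) by abel, show xstar - xplus = -(xplus - xstar) by abel,
      inner_neg_neg]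
  have h2c : 2 * c * (f xplus - f xstar) ≤ 2 * ⟪x - xplus, xplus - xstar⟫_ℝ := by
    have := mul_le_mul_of_nonneg_left hmain (by positivity : (0:ℝ) ≤ 2 * c)
    rw [hinner] at this
    calc 2 * c * (f xplus - f xstar) ≤ 2 * c * ((1/c) * ⟪x - xplus, xplus - xstar⟫_ℝ) := this
    _ = 2 * ⟪x - xplus, xplus - xstar⟫_ℝ := by field_simp
  nlinarith [sq_nonneg (‖x - xplus‖)]
end
end

section
/- Let f be proper closed convex with nonempty solution set S, and {c_k} positive. The proximal point iterates x_{k+1} = prox_{c_k,f}(x_k) satisfy f(x_k) − f⋆ ≤ dist²(x_0, S)/(2·∑_{t=0}^{k−1} c_t). -/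
/-!
A proximal step `u = prox_{c,f}(w)` satisfies the variational inequality
`c (f u - f z) ≤ ⟪u - w, z - u⟫` (compare the proximal objective at `u` with its value at
`u + l (z - u)`, use convexity, divide by `l` and let `l → 0⁺`), i.e. `(w - u) / c ∈ ∂f(u)`.
Expanding `‖z - w‖²` around `u` turns this into the three-point bound
`2c (f u - f z) ≤ ‖z - w‖² - ‖z - u‖²`. Summing it along the iterates, and using that
`f (x k)` is nonincreasing, gives `2 (∑_{t<k} c t) (f (x k) - f z) ≤ ‖z - x 0‖²` for every `z`;
taking `z ∈ S` and the infimum over `S` gives the claim.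
-/

open Metric Set Filter

local notation "⟪" x ", " y "⟫_ℝ" => @inner ℝ _ _ x y

noncomputable section

open Topology

section Prox

variable {E : Type*} [NormedAddCommGroup E] {f : E → ℝ} {c : ℝ} {w u : E}

theorem prox_le_self (hc : 0 < c)
    (hu : IsMinOn (fun z => f z + 1 / (2 * c) * ‖z - w‖ ^ 2) univ u) : f u ≤ f w := by
  have h := isMinOn_univ_iff.1 hu w
  simp only [sub_self, norm_zero] at h
  have : 0 ≤ 1 / (2 * c) * ‖u - w‖ ^ 2 := by positivity
  linarith

variable [InnerProductSpace ℝ E]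

theorem ConvexOn.mul_sub_le_inner_of_isMinOn_prox (hf : ConvexOn ℝ univ f) (hc : 0 < c)
    (hu : IsMinOn (fun z => f z + 1 / (2 * c) * ‖z - w‖ ^ 2) univ u) (z : E) :
    c * (f u - f z) ≤ ⟪u - w, z - u⟫_ℝ := by
  set I := ⟪u - w, z - u⟫_ℝ
  have hstep : ∀ l ∈ Ioo (0 : ℝ) 1, c * (f u - f z) ≤ I + l * (‖z - u‖ ^ 2 / 2) := by
    rintro l ⟨hl0, hl1⟩
    have hmin := isMinOn_univ_iff.1 hu (u + l • (z - u))
    have hconv : f (u + l • (z - u)) ≤ (1 - l) * f u + l * f z := by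
      have h := hf.2 (mem_univ u) (mem_univ z) (sub_nonneg.2 hl1.le) hl0.le (by ring)
      rwa [show (1 - l) • u + l • z = u + l • (z - u) by module] at h
    have hnorm : ‖u + l • (z - u) - w‖ ^ 2 = ‖u - w‖ ^ 2 + 2 * (l * I) + l ^ 2 * ‖z - u‖ ^ 2 := by
      rw [add_sub_right_comm, norm_add_sq_real, real_inner_smul_right, norm_smul, mul_pow,
        Real.norm_eq_abs, sq_abs]
    simp only [hnorm] at hmin
    have key : l * (c * (f u - f z)) ≤ l * (I + l * (‖z - u‖ ^ 2 / 2)) := by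
      have h2c : 0 < 2 * c := by positivity
      field_simp at hmin
      nlinarith
    exact le_of_mul_le_mul_left key hl0
  have hlim : Tendsto (fun l : ℝ => I + l * (‖z - u‖ ^ 2 / 2)) (𝓝[>] 0) (𝓝 I) := by
    have : Continuous (fun l : ℝ => I + l * (‖z - u‖ ^ 2 / 2)) := by fun_prop
    simpa using (this.tendsto 0).mono_left nhdsWithin_le_nhds
  exact ge_of_tendsto hlim (eventually_of_mem (Ioo_mem_nhdsGT one_pos) hstep)

theorem ConvexOn.prox_three_point (hf : ConvexOn ℝ univ f) (hc : 0 < c)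
    (hu : IsMinOn (fun z => f z + 1 / (2 * c) * ‖z - w‖ ^ 2) univ u) (z : E) :
    2 * c * (f u - f z) ≤ ‖z - w‖ ^ 2 - ‖z - u‖ ^ 2 := by
  have hexpand : ‖z - w‖ ^ 2 = ‖z - u‖ ^ 2 + 2 * ⟪u - w, z - u⟫_ℝ + ‖u - w‖ ^ 2 := by
    rw [show z - w = (z - u) + (u - w) by abel, norm_add_sq_real, real_inner_comm]
  nlinarith [hf.mul_sub_le_inner_of_isMinOn_prox hc hu z, sq_nonneg ‖u - w‖]

end Prox

theorem sum_mul_le_sub_of_antitone {a d w : ℕ → ℝ} (ha : Antitone a) (hw : ∀ k, 0 ≤ w k)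
    (hstep : ∀ k, w k * a (k + 1) ≤ d k - d (k + 1)) (k : ℕ) :
    (∑ t ∈ Finset.range k, w t) * a k ≤ d 0 - d k := by
  induction k with
  | zero => simp
  | succ k ih =>
    have hsum : 0 ≤ ∑ t ∈ Finset.range k, w t := Finset.sum_nonneg fun t _ => hw t
    have hmono := mul_le_mul_of_nonneg_left (ha k.le_succ) hsum
    rw [Finset.sum_range_succ, add_mul]
    linarith [hstep k]

theorem Metric.le_infDist_sq {α : Type*} [PseudoMetricSpace α] {x : α} {s : Set α} {a : ℝ}
    (hs : s.Nonempty) (h : ∀ y ∈ s, a ≤ dist x y ^ 2) : a ≤ infDist x s ^ 2 := by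
  by_contra! hlt
  have : infDist x s < √a := (Real.lt_sqrt infDist_nonneg).2 hlt
  obtain ⟨y, hy, hdist⟩ := (infDist_lt_iff hs).1 this
  have := (Real.lt_sqrt dist_nonneg).1 hdist
  linarith [h y hy]

theorem ppm_sublinear_convergence_general {n : ℕ} (f : En n → ℝ) (fstar : ℝ)
    (hconv : ConvexOn ℝ Set.univ f)
    (S : Set (En n)) (hS : S = {x | f x = fstar}) (hne : S.Nonempty)
    (c : ℕ → ℝ) (hc : ∀ k, 0 < c k)
    (x : ℕ → En n)
    (hiter : ∀ k z, f (x (k + 1)) + 1 / (2 * c k) * ‖x (k + 1) - x k‖ ^ 2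
      ≤ f z + 1 / (2 * c k) * ‖z - x k‖ ^ 2) :
    ∀ k, 0 < k →
      f (x k) - fstar ≤ (infDist (x 0) S) ^ 2 / (2 * ∑ t ∈ Finset.range k, c t) := by
  intro k hk
  have hprox (j : ℕ) :
      IsMinOn (fun z => f z + 1 / (2 * c j) * ‖z - x j‖ ^ 2) univ (x (j + 1)) :=
    isMinOn_univ_iff.2 (hiter j)
  have hdescent : Antitone fun j => f (x j) - fstar :=
    antitone_nat_of_succ_le fun j => sub_le_sub_right (prox_le_self (hc j) (hprox j)) _
  have hsum : 0 < ∑ t ∈ Finset.range k, c t :=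
    Finset.sum_pos (fun t _ => hc t) ⟨0, Finset.mem_range.2 hk⟩
  rw [le_div_iff₀ (by positivity), mul_comm]
  refine le_infDist_sq hne fun z hz => ?_
  have hfz : f z = fstar := by rw [hS] at hz; exact hz
  have hstep (j : ℕ) : 2 * c j * (f (x (j + 1)) - fstar) ≤ ‖z - x j‖ ^ 2 - ‖z - x (j + 1)‖ ^ 2 :=
    hfz ▸ hconv.prox_three_point (hc j) (hprox j) z
  calc 2 * (∑ t ∈ Finset.range k, c t) * (f (x k) - fstar)
      ≤ ‖z - x 0‖ ^ 2 - ‖z - x k‖ ^ 2 := by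
        rw [Finset.mul_sum]
        exact sum_mul_le_sub_of_antitone hdescent (fun t => (mul_pos two_pos (hc t)).le) hstep k
    _ ≤ dist (x 0) z ^ 2 := by
        rw [dist_comm, dist_eq_norm]
        linarith [sq_nonneg ‖z - x k‖]

/-- Sublinear convergence of the proximal point method:
f(x_k) − f⋆ ≤ dist²(x_0,S)/(2∑_{t<k} c_t). -/
theorem ppm_sublinear_convergence {n : ℕ} (f : En n → ℝ) (fstar : ℝ)
    (hlsc : LowerSemicontinuous f) (hconv : ConvexOn ℝ Set.univ f)
    (hlb : ∀ y, fstar ≤ f y)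
    (S : Set (En n)) (hS : S = {x | f x = fstar}) (hne : S.Nonempty)
    (c : ℕ → ℝ) (hc : ∀ k, 0 < c k)
    (x : ℕ → En n)
    (hiter : ∀ k z, f (x (k + 1)) + 1 / (2 * c k) * ‖x (k + 1) - x k‖ ^ 2
      ≤ f z + 1 / (2 * c k) * ‖z - x k‖ ^ 2) :
    ∀ k, 0 < k →
      f (x k) - fstar ≤ (infDist (x 0) S) ^ 2 / (2 * ∑ t ∈ Finset.range k, c t) :=
  ppm_sublinear_convergence_general f fstar hconv S hS hne c hc x hiter
end
end

section
/- For a proper closed convex function f satisfying the PL inequality μ_p·(f(x) − f⋆) ≤ dist²(0, ∂f(x)) over a sublevel set containing the iterates, the proximal point iterates satisfy f(x_{k+1}) − f⋆ ≤ (2/(2 + μ_p c_k))·(f(x_k) − f⋆). -/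
open Metric Set Filter

local notation "⟪" x ", " y "⟫_ℝ" => @inner ℝ _ _ x y

noncomputable section

/-- Under PL on a region containing the iterates, the proximal point
step satisfies f(x_{k+1}) − f⋆ ≤ (2/(2 + μ_p c_k))·(f(x_k) − f⋆). -/
theorem ppm_linear_cost_under_pl {n : ℕ} (f : En n → ℝ) (fstar μp c : ℝ)
    (hlsc : LowerSemicontinuous f) (hconv : ConvexOn ℝ Set.univ f)
    (hlb : ∀ y, fstar ≤ f y)
    (S : Set (En n)) (hS : S = {x | f x = fstar}) (hne : S.Nonempty)
    (hμp : 0 < μp) (hc : 0 < c)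
    (K : Set (En n))
    (hPL : ∀ z ∈ K, μp * (f z - fstar) ≤ (infDist (0 : En n) (convexSubdiff f z)) ^ 2)
    (xk xnext : En n)
    (hprox : ∀ z, f xnext + 1 / (2 * c) * ‖xnext - xk‖ ^ 2
      ≤ f z + 1 / (2 * c) * ‖z - xk‖ ^ 2)
    (hmem : xnext ∈ K) :
    f xnext - fstar ≤ (2 / (2 + μp * c)) * (f xk - fstar) := by
  set g : En n := (c⁻¹ : ℝ) • (xk - xnext) with hgdef
  -- g is a convex subgradient of f at xnext
  have hg : g ∈ convexSubdiff f xnext := by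
    intro y
    have key : ∀ t : ℝ, 0 < t → t ≤ 1 →
        f xnext + ⟪g, y - xnext⟫_ℝ ≤ f y + t * (‖y - xnext‖ ^ 2 / (2 * c)) := by
      intro t ht ht1
      have hconvx : f ((1 - t) • xnext + t • y) ≤ (1 - t) * f xnext + t * f y :=
        hconv.2 (mem_univ xnext) (mem_univ y) (by linarith) (le_of_lt ht) (by ring)
      have hpz := hprox ((1 - t) • xnext + t • y)
      have hz : ((1 - t) • xnext + t • y) - xk = (xnext - xk) + t • (y - xnext) := by
        module
      have hnorm : ‖((1 - t) • xnext + t • y) - xk‖ ^ 2 =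
          ‖xnext - xk‖ ^ 2 + 2 * (t * ⟪xnext - xk, y - xnext⟫_ℝ) + t ^ 2 * ‖y - xnext‖ ^ 2 := by
        rw [hz, @norm_add_sq_real, real_inner_smul_right, norm_smul]
        simp [mul_pow, abs_of_pos ht]
        try ring
      have hinner : ⟪g, y - xnext⟫_ℝ = -(c⁻¹ * ⟪xnext - xk, y - xnext⟫_ℝ) := by
        rw [hgdef, real_inner_smul_left]
        have : ⟪xk - xnext, y - xnext⟫_ℝ = -⟪xnext - xk, y - xnext⟫_ℝ := by
          rw [← inner_neg_left]; congr 1; abel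
        rw [this]; ring
      rw [hnorm] at hpz
      rw [hinner]
      have hc' : (0:ℝ) < 2 * c := by linarith
      have h1 : t * f xnext ≤ t * f y +
          1 / (2 * c) * (2 * (t * ⟪xnext - xk, y - xnext⟫_ℝ) + t ^ 2 * ‖y - xnext‖ ^ 2) := by
        nlinarith [hpz, hconvx]
      have e1 : 1 / (2 * c) * (2 * (t * ⟪xnext - xk, y - xnext⟫_ℝ) + t ^ 2 * ‖y - xnext‖ ^ 2)
          = t * (c⁻¹ * ⟪xnext - xk, y - xnext⟫_ℝ) + t * (t * (‖y - xnext‖ ^ 2 / (2 * c))) := by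
        field_simp
      rw [e1] at h1
      have goal' : t * (f xnext + -(c⁻¹ * ⟪xnext - xk, y - xnext⟫_ℝ))
          ≤ t * (f y + t * (‖y - xnext‖ ^ 2 / (2 * c))) := by nlinarith [h1]
      exact le_of_mul_le_mul_left goal' ht
    -- pass to the limit t → 0⁺
    have hC : (0:ℝ) ≤ ‖y - xnext‖ ^ 2 / (2 * c) := by positivity
    refine le_of_forall_pos_le_add ?_
    intro ε hε
    set C := ‖y - xnext‖ ^ 2 / (2 * c)
    have hCpos : (0:ℝ) < C + 1 := by linarith
    have htpos : 0 < min 1 (ε / (C + 1)) := lt_min one_pos (div_pos hε hCpos)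
    have h := key (min 1 (ε / (C + 1))) htpos (min_le_left _ _)
    have htc : min 1 (ε / (C + 1)) * C ≤ ε := by
      calc min 1 (ε / (C + 1)) * C ≤ (ε / (C + 1)) * C :=
            mul_le_mul_of_nonneg_right (min_le_right _ _) hC
        _ ≤ (ε / (C + 1)) * (C + 1) := by
            apply mul_le_mul_of_nonneg_left (by linarith) (le_of_lt (div_pos hε hCpos))
        _ = ε := by field_simp
    linarith
  -- infDist bound
  have hid : infDist (0 : En n) (convexSubdiff f xnext) ≤ ‖g‖ := by
    have := infDist_le_dist_of_mem (x := (0 : En n)) hg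
    simpa [dist_eq_norm] using this
  have hid0 : 0 ≤ infDist (0 : En n) (convexSubdiff f xnext) := infDist_nonneg
  have hgnorm : ‖g‖ ^ 2 = ‖xnext - xk‖ ^ 2 / c ^ 2 := by
    rw [hgdef, norm_smul, norm_sub_rev]
    rw [mul_pow]
    simp [abs_of_pos (inv_pos.mpr hc)]
    field_simp
  have hPL' := hPL xnext hmem
  have hsq : (infDist (0 : En n) (convexSubdiff f xnext)) ^ 2 ≤ ‖xnext - xk‖ ^ 2 / c ^ 2 := by
    rw [← hgnorm]; exact pow_le_pow_left₀ hid0 hid 2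
  have hdesc := hprox xk
  simp at hdesc
  -- combine
  have hd0 : 0 ≤ f xnext - fstar := by linarith [hlb xnext]
  have hNN : c ^ 2 * (μp * (f xnext - fstar)) ≤ ‖xnext - xk‖ ^ 2 := by
    have := le_trans hPL' hsq
    rw [le_div_iff₀ (by positivity)] at this
    linarith
  rw [div_mul_eq_mul_div, le_div_iff₀ (by nlinarith : (0:ℝ) < 2 + μp * c)]
  have h2c : (0:ℝ) < 2 * c := by linarith
  have : 1 / (2 * c) * ‖xnext - xk‖ ^ 2 ≥ 1 / (2 * c) * (c ^ 2 * (μp * (f xnext - fstar))) :=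
    mul_le_mul_of_nonneg_left hNN (by positivity)
  have heq : 1 / (2 * c) * (c ^ 2 * (μp * (f xnext - fstar))) = c * μp * (f xnext - fstar) / 2 := by
    field_simp
  have hdd : c⁻¹ * 2⁻¹ * ‖xnext - xk‖ ^ 2 = 1 / (2 * c) * ‖xnext - xk‖ ^ 2 := by ring
  linarith [hdesc, this, heq, hdd]
end
end

section
/- For a proper closed convex function f satisfying quadratic growth μ_q·dist²(x,S) ≤ f(x) − f⋆ on a region containing the iterates, the proximal point iterates satisfy dist(x_{k+1}, S) ≤ (1/√(2c_k μ_q + 1))·dist(x_k, S). -/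
open Metric Set Filter

local notation "⟪" x ", " y "⟫_ℝ" => @inner ℝ _ _ x y

noncomputable section

lemma norm_combo_sq {n : ℕ} (a b : En n) (t : ℝ) :
    ‖t • a + (1 - t) • b‖ ^ 2
      = t * ‖a‖ ^ 2 + (1 - t) * ‖b‖ ^ 2 - t * (1 - t) * ‖a - b‖ ^ 2 := by
  have e1 : ‖t • a + (1 - t) • b‖ ^ 2
      = ‖t • a‖ ^ 2 + 2 * ⟪t • a, (1 - t) • b⟫_ℝ + ‖(1 - t) • b‖ ^ 2 := by
    rw [norm_add_sq_real]
  have e2 : ‖a - b‖ ^ 2 = ‖a‖ ^ 2 - 2 * ⟪a, b⟫_ℝ + ‖b‖ ^ 2 := by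
    rw [norm_sub_sq_real]
  have e3 : ⟪t • a, (1 - t) • b⟫_ℝ = t * (1 - t) * ⟪a, b⟫_ℝ := by
    rw [real_inner_smul_left, real_inner_smul_right]; ring
  have e4 : ‖t • a‖ ^ 2 = t ^ 2 * ‖a‖ ^ 2 := by
    rw [norm_smul]; simp [mul_pow, sq_abs]
  have e5 : ‖(1 - t) • b‖ ^ 2 = (1 - t) ^ 2 * ‖b‖ ^ 2 := by
    rw [norm_smul]; simp [mul_pow, sq_abs]
  rw [e1, e2, e3, e4, e5]; ring

/-- Under quadratic growth on a region containing the iterates, the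
proximal point step satisfies dist(x_{k+1},S) ≤ (1/√(2c_kμ_q + 1))·dist(x_k,S). -/
theorem ppm_linear_dist_under_qg {n : ℕ} (f : En n → ℝ) (fstar μq c : ℝ)
    (hlsc : LowerSemicontinuous f) (hconv : ConvexOn ℝ Set.univ f)
    (hlb : ∀ y, fstar ≤ f y)
    (S : Set (En n)) (hS : S = {x | f x = fstar}) (hne : S.Nonempty)
    (hμq : 0 < μq) (hc : 0 < c)
    (K : Set (En n))
    (hQG : ∀ z ∈ K, μq * (infDist z S) ^ 2 ≤ f z - fstar)
    (xk xnext : En n)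
    (hprox : ∀ z, f xnext + 1 / (2 * c) * ‖xnext - xk‖ ^ 2
      ≤ f z + 1 / (2 * c) * ‖z - xk‖ ^ 2)
    (hmem : xnext ∈ K) :
    infDist xnext S ≤ (1 / Real.sqrt (2 * c * μq + 1)) * infDist xk S := by
  -- S is closed
  have hScl : IsClosed S := by
    have : S = f ⁻¹' Set.Iic fstar := by
      ext x; simp [hS, Set.mem_preimage, le_antisymm_iff, hlb x]
    rw [this]; exact hlsc.isClosed_preimage fstar
  -- projection of xk onto S
  obtain ⟨xb, hxbS, hxbd⟩ := hScl.exists_infDist_eq_dist hne xk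
  have hfxb : f xb = fstar := by rw [hS] at hxbS; exact hxbS
  set A : ℝ := 1 / (2 * c) * ‖xb - xnext‖ ^ 2 with hA
  clear_value A
  have hApos : 0 ≤ A := by rw [hA]; positivity
  -- strong convexity of prox objective: key inequality for all t ∈ (0,1)
  have key : ∀ t : ℝ, 0 < t → t < 1 →
      (1 - t) * A ≤ (f xb + 1 / (2 * c) * ‖xb - xk‖ ^ 2)
        - (f xnext + 1 / (2 * c) * ‖xnext - xk‖ ^ 2) := by
    intro t ht0 ht1
    set z := t • xb + (1 - t) • xnext with hz
    have hconvf : f z ≤ t * f xb + (1 - t) * f xnext := by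
      have := hconv.2 (Set.mem_univ xb) (Set.mem_univ xnext)
        ht0.le (by linarith : (0:ℝ) ≤ 1 - t) (by ring : t + (1 - t) = 1)
      simpa [smul_eq_mul] using this
    have hid : ‖z - xk‖ ^ 2
        = t * ‖xb - xk‖ ^ 2 + (1 - t) * ‖xnext - xk‖ ^ 2
          - t * (1 - t) * ‖xb - xnext‖ ^ 2 := by
      have h0 : z - xk = t • (xb - xk) + (1 - t) • (xnext - xk) := by
        simp [hz, smul_sub]; module
      have h1 : (xb - xk) - (xnext - xk) = xb - xnext := by abel
      rw [h0, norm_combo_sq, h1]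
    have hp := hprox z
    have hc2 : 0 < 1 / (2 * c) := by positivity
    rw [hid] at hp
    have hcomb : f xnext + 1 / (2 * c) * ‖xnext - xk‖ ^ 2
        ≤ t * f xb + (1 - t) * f xnext + 1 / (2 * c) * (t * ‖xb - xk‖ ^ 2
          + (1 - t) * ‖xnext - xk‖ ^ 2 - t * (1 - t) * ‖xb - xnext‖ ^ 2) := by
      linarith
    have h6 : t * ((1 - t) * A) ≤ t * ((f xb + 1 / (2 * c) * ‖xb - xk‖ ^ 2)
        - (f xnext + 1 / (2 * c) * ‖xnext - xk‖ ^ 2)) := by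
      rw [hA]; nlinarith [hcomb]
    exact le_of_mul_le_mul_left h6 ht0
  -- pass to the limit t → 0
  have hkey : A ≤ (f xb + 1 / (2 * c) * ‖xb - xk‖ ^ 2)
      - (f xnext + 1 / (2 * c) * ‖xnext - xk‖ ^ 2) := by
    set B := (f xb + 1 / (2 * c) * ‖xb - xk‖ ^ 2)
      - (f xnext + 1 / (2 * c) * ‖xnext - xk‖ ^ 2) with hB
    clear_value B
    refine le_of_forall_pos_le_add fun ε hε => ?_
    rcases eq_or_lt_of_le hApos with h0 | hApos'
    · have h12 := key (1/2) (by norm_num) (by norm_num)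
      rw [← h0] at h12 ⊢
      linarith
    · set t := min (ε / A) (1/2) with htdef
      have ht0 : 0 < t := lt_min (by positivity) (by norm_num)
      have ht1 : t < 1 := lt_of_le_of_lt (min_le_right _ _) (by norm_num)
      have h1 := key t ht0 ht1
      have h2 : t * A ≤ ε := by
        calc t * A ≤ (ε / A) * A := by
              exact mul_le_mul_of_nonneg_right (min_le_left _ _) hApos
          _ = ε := div_mul_cancel₀ _ (ne_of_gt hApos')
      nlinarith
  -- combine with quadratic growth
  have hd : infDist xnext S ≤ ‖xb - xnext‖ := by
    have := infDist_le_dist_of_mem (x := xnext) hxbS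
    rwa [dist_eq_norm, ← norm_neg, neg_sub] at this
  have hdnn : 0 ≤ infDist xnext S := infDist_nonneg
  have hq := hQG xnext hmem
  have hxkd : ‖xb - xk‖ = infDist xk S := by
    rw [hxbd, dist_eq_norm, ← norm_neg, neg_sub]
  set d := infDist xnext S with hdd
  set D := infDist xk S with hD
  have hDnn : 0 ≤ D := infDist_nonneg
  have hsq : (2 * c * μq + 1) * d ^ 2 ≤ D ^ 2 := by
    have hnn : 0 ≤ ‖xnext - xk‖ ^ 2 := by positivity
    have hdle : d ^ 2 ≤ ‖xb - xnext‖ ^ 2 := by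
      have := mul_self_le_mul_self hdnn hd
      simpa [pow_two] using this
    have hc2 : 0 < 1 / (2 * c) := by positivity
    rw [hfxb, hxkd] at hkey
    have h7 : 1 / (2 * c) * d ^ 2 + μq * d ^ 2 ≤ 1 / (2 * c) * D ^ 2 := by
      have := mul_le_mul_of_nonneg_left hdle hc2.le
      have := mul_nonneg hc2.le hnn
      rw [hA] at hkey
      linarith
    have h8 := mul_le_mul_of_nonneg_left h7 (by positivity : (0:ℝ) ≤ 2 * c)
    have e1 : (2 * c) * (1 / (2 * c) * d ^ 2) = d ^ 2 := by field_simp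
    have e2 : (2 * c) * (1 / (2 * c) * D ^ 2) = D ^ 2 := by field_simp
    nlinarith [h8, e1, e2]
  -- conclude
  have hM : 0 < 2 * c * μq + 1 := by positivity
  have : d ^ 2 ≤ (1 / Real.sqrt (2 * c * μq + 1) * D) ^ 2 := by
    rw [mul_pow, div_pow, one_pow, Real.sq_sqrt (le_of_lt hM)]
    rw [div_mul_eq_mul_div, le_div_iff₀ hM] at *
    linarith [hsq]
  calc d = Real.sqrt (d ^ 2) := by rw [Real.sqrt_sq hdnn]
    _ ≤ Real.sqrt ((1 / Real.sqrt (2 * c * μq + 1) * D) ^ 2) :=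
        Real.sqrt_le_sqrt this
    _ = 1 / Real.sqrt (2 * c * μq + 1) * D := by
        rw [Real.sqrt_sq (by positivity)]
end
end

section
/- For a proper closed convex function f satisfying the error bound dist(x,S) ≤ μ_e·dist(0, ∂f(x)) on a region containing the iterates, the proximal point iterates satisfy dist²(x_{k+1}, S) ≤ (μ_e²/(c_k² + μ_e²))·dist²(x_k, S). -/
open Metric Set Filter

local notation "⟪" x ", " y "⟫_ℝ" => @inner ℝ _ _ x y

noncomputable section

lemma prox_subgrad {n : ℕ} (f : En n → ℝ) (c : ℝ) (hc : 0 < c)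
    (hconv : ConvexOn ℝ Set.univ f) (xk xnext : En n)
    (hprox : ∀ z, f xnext + 1 / (2 * c) * ‖xnext - xk‖ ^ 2
      ≤ f z + 1 / (2 * c) * ‖z - xk‖ ^ 2) :
    c⁻¹ • (xk - xnext) ∈ convexSubdiff f xnext := by
  intro z
  have hB : (0:ℝ) ≤ ‖z - xnext‖ ^ 2 := by positivity
  set B : ℝ := ‖z - xnext‖ ^ 2 with hBdef
  set A : ℝ := ⟪xnext - xk, z - xnext⟫_ℝ with hAdef
  have hinner : ⟪c⁻¹ • (xk - xnext), z - xnext⟫_ℝ = -(c⁻¹ * A) := by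
    rw [real_inner_smul_left, hAdef]
    rw [show xk - xnext = -(xnext - xk) by abel, inner_neg_left]
    ring
  rw [hinner]
  have key : ∀ t : ℝ, 0 < t → t ≤ 1 →
      f xnext + -(c⁻¹ * A) ≤ f z + t * (1 / (2 * c) * B) := by
    intro t ht ht1
    have hz := hprox (xnext + t • (z - xnext))
    have hcv := hconv.2 (mem_univ xnext) (mem_univ z)
      (show (0:ℝ) ≤ 1 - t by linarith) ht.le (by ring)
    have heq : (1 - t) • xnext + t • z = xnext + t • (z - xnext) := by module
    rw [heq] at hcv
    have hnorm : ‖xnext + t • (z - xnext) - xk‖ ^ 2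
        = ‖xnext - xk‖ ^ 2 + 2 * (t * A) + t ^ 2 * B := by
      have h1 : xnext + t • (z - xnext) - xk = (xnext - xk) + t • (z - xnext) := by abel
      rw [h1, norm_add_sq_real, real_inner_smul_right, norm_smul, Real.norm_eq_abs,
        mul_pow, sq_abs]
    rw [hnorm] at hz
    have h2 : t * (f xnext + -(c⁻¹ * A) - (f z + t * (1 / (2 * c) * B))) ≤ t * 0 := by
      have hc' : (0:ℝ) < 2 * c := by linarith
      have e1 : 1 / (2 * c) * (‖xnext - xk‖ ^ 2 + 2 * (t * A) + t ^ 2 * B)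
          = 1 / (2 * c) * ‖xnext - xk‖ ^ 2 + t * (c⁻¹ * A) + t * (t * (1 / (2 * c) * B)) := by
        field_simp
      rw [e1] at hz
      simp only [smul_eq_mul] at hcv
      nlinarith [hz, hcv]
    have h3 := le_of_mul_le_mul_left h2 ht
    linarith
  -- take t → 0
  refine le_of_forall_pos_le_add fun ε hε => ?_
  set M : ℝ := 1 / (2 * c) * B with hM
  have hM0 : 0 ≤ M := by positivity
  set t : ℝ := min 1 (ε / (M + 1)) with htdef
  have ht0 : 0 < t := lt_min one_pos (by positivity)
  have ht1 : t ≤ 1 := min_le_left _ _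
  have := key t ht0 ht1
  have htM : t * M ≤ ε := by
    have h4 : t ≤ ε / (M + 1) := min_le_right _ _
    have h5 : t * M ≤ ε / (M + 1) * M := by nlinarith
    have h6 : ε / (M + 1) * M ≤ ε := by
      rw [div_mul_eq_mul_div, div_le_iff₀ (by linarith)]
      nlinarith
    linarith
  linarith

/-- Under the error bound on a region containing the iterates, the
proximal point step satisfies dist²(x_{k+1},S) ≤ (μ_e²/(c_k² + μ_e²))·dist²(x_k,S). -/
theorem ppm_linear_dist_under_eb {n : ℕ} (f : En n → ℝ) (fstar μe c : ℝ)
    (hlsc : LowerSemicontinuous f) (hconv : ConvexOn ℝ Set.univ f)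
    (hlb : ∀ y, fstar ≤ f y)
    (S : Set (En n)) (hS : S = {x | f x = fstar}) (hne : S.Nonempty)
    (hμe : 0 < μe) (hc : 0 < c)
    (K : Set (En n))
    (hEB : ∀ z ∈ K, infDist z S ≤ μe * infDist (0 : En n) (convexSubdiff f z))
    (xk xnext : En n)
    (hprox : ∀ z, f xnext + 1 / (2 * c) * ‖xnext - xk‖ ^ 2
      ≤ f z + 1 / (2 * c) * ‖z - xk‖ ^ 2)
    (hmem : xnext ∈ K) :
    (infDist xnext S) ^ 2 ≤ (μe ^ 2 / (c ^ 2 + μe ^ 2)) * (infDist xk S) ^ 2 := by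
  have hg : c⁻¹ • (xk - xnext) ∈ convexSubdiff f xnext :=
    prox_subgrad f c hc hconv xk xnext hprox
  set g := c⁻¹ • (xk - xnext) with hgdef
  set d1 := infDist xnext S with hd1
  set d0 := infDist xk S with hd0
  set Δ := ‖xnext - xk‖ with hΔ
  have hd1n : 0 ≤ d1 := infDist_nonneg
  have hd0n : 0 ≤ d0 := infDist_nonneg
  have hΔn : 0 ≤ Δ := norm_nonneg _
  -- error bound part: d1 ≤ μe * Δ / c
  have hEB1 : d1 ≤ μe * (c⁻¹ * Δ) := by
    have h1 : infDist (0 : En n) (convexSubdiff f xnext) ≤ dist (0 : En n) g :=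
      infDist_le_dist_of_mem hg
    have h2 : dist (0 : En n) g = c⁻¹ * Δ := by
      rw [dist_eq_norm, zero_sub, norm_neg, hgdef, norm_smul, Real.norm_eq_abs,
        abs_of_pos (inv_pos.mpr hc), show xk - xnext = -(xnext - xk) by abel, norm_neg]
    calc d1 ≤ μe * infDist (0 : En n) (convexSubdiff f xnext) := hEB xnext hmem
      _ ≤ μe * (c⁻¹ * Δ) := by rw [← h2]; exact mul_le_mul_of_nonneg_left h1 hμe.le
  -- firm nonexpansiveness part: d1^2 + Δ^2 ≤ d0^2
  have hfirm : ∀ y ∈ S, d1 ^ 2 + Δ ^ 2 ≤ dist xk y ^ 2 := by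
    intro y hy
    have hfy : f y = fstar := by rw [hS] at hy; exact hy
    have hsub := hg y
    have hinn : ⟪g, y - xnext⟫_ℝ ≤ 0 := by
      have := hlb xnext
      linarith [hsub, hfy ▸ hsub]
    have hinn2 : ⟪xk - xnext, y - xnext⟫_ℝ ≤ 0 := by
      have : ⟪g, y - xnext⟫_ℝ = c⁻¹ * ⟪xk - xnext, y - xnext⟫_ℝ := real_inner_smul_left _ _ _
      nlinarith [inv_pos.mpr hc]
    have hexp : dist xk y ^ 2
        = Δ ^ 2 + 2 * (- ⟪xk - xnext, y - xnext⟫_ℝ) + ‖xnext - y‖ ^ 2 := by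
      rw [dist_eq_norm, show xk - y = (xk - xnext) + (xnext - y) by abel, norm_add_sq_real,
        show xnext - y = -(y - xnext) by abel, inner_neg_right, norm_neg,
        show ‖xk - xnext‖ = Δ by rw [hΔ, show xk - xnext = -(xnext - xk) by abel, norm_neg]]
      try ring
    have hd1y : d1 ≤ ‖xnext - y‖ := by
      rw [show ‖xnext - y‖ = dist xnext y from (dist_eq_norm _ _).symm]
      exact infDist_le_dist_of_mem hy
    nlinarith [hd1y, hd1n]
  have hfirm' : d1 ^ 2 + Δ ^ 2 ≤ d0 ^ 2 := by
    set r := Real.sqrt (d1 ^ 2 + Δ ^ 2) with hr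
    have hr2 : r ^ 2 = d1 ^ 2 + Δ ^ 2 := Real.sq_sqrt (by positivity)
    have hrn : 0 ≤ r := Real.sqrt_nonneg _
    have hrd0 : r ≤ d0 := by
      by_contra hcon
      push_neg at hcon
      obtain ⟨y, hy, hdy⟩ := (infDist_lt_iff hne).mp hcon
      have h1 := hfirm y hy
      nlinarith [dist_nonneg (x := xk) (y := y)]
    nlinarith
  -- combine
  have h1 : c * d1 ≤ μe * Δ := by
    have h := mul_le_mul_of_nonneg_left hEB1 hc.le
    have he : c * (μe * (c⁻¹ * Δ)) = μe * Δ := by field_simp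
    linarith [he ▸ h]
  have h2 : (c * d1) ^ 2 ≤ (μe * Δ) ^ 2 := pow_le_pow_left₀ (by positivity) h1 2
  rw [div_mul_eq_mul_div, le_div_iff₀ (by positivity)]
  nlinarith [h2, mul_le_mul_of_nonneg_left hfirm' (sq_nonneg μe)]
end
end

section
/- Let f : ℝⁿ → ℝ ∪ {+∞} be proper and closed, and suppose a point z satisfies f(z) ≤ inf f + ε for some ε > 0. Then for any ρ > 0 there exists y with ‖z − y‖ ≤ ε/ρ, f(y) ≤ f(z), and the slope of f at y is at most ρ, i.e., limsup_{x→y} (f(y) − f(x))⁺/‖x − y‖ ≤ ρ. -/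
open Metric Set Filter

local notation "⟪" x ", " y "⟫_ℝ" => @inner ℝ _ _ x y

noncomputable section

/-- A lower semicontinuous function attains its minimum on a nonempty compact set. -/
lemma lsc_exists_min_on_compact {n : ℕ} {g : En n → ℝ} (hg : LowerSemicontinuous g)
    {K : Set (En n)} (hK : IsCompact K) (hne : K.Nonempty) :
    ∃ y ∈ K, ∀ x ∈ K, g y ≤ g x := by
  have hb : BddBelow (g '' K) := by
    by_contra hcon
    -- pick u k ∈ K with g (u k) < -k
    have hpick : ∀ k : ℕ, ∃ x ∈ K, g x < -(k : ℝ) := by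
      intro k
      by_contra h
      push_neg at h
      exact hcon ⟨-(k : ℝ), by rintro _ ⟨x, hx, rfl⟩; exact h x hx⟩
    choose u hu hgu using hpick
    obtain ⟨y, hyK, φ, hφ, hlim⟩ := hK.tendsto_subseq hu
    obtain ⟨c, hc⟩ : ∃ c : ℝ, c < g y := ⟨g y - 1, by linarith⟩
    have hev := (hg y c hc).and (Metric.eventually_nhds_iff.mpr ⟨1, one_pos, fun _ h => h⟩)
    have := (hlim.eventually (hg y c hc)).and
      (eventually_atTop.mpr ⟨max 0 ⌈|c|⌉₊ + 1, fun b hb => hb⟩)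
    obtain ⟨k, hk1, hk2⟩ := this.exists
    simp only [Function.comp_apply] at hk1
    have : g (u (φ k)) < -(φ k : ℝ) := hgu (φ k)
    have hφk : (k : ℝ) ≤ (φ k : ℝ) := by exact_mod_cast hφ.id_le k
    have : -(φ k : ℝ) ≤ c := by
      have : |c| ≤ (⌈|c|⌉₊ : ℝ) := Nat.le_ceil _
      have hkc : (⌈|c|⌉₊ : ℝ) ≤ (k : ℝ) := by
        have : ⌈|c|⌉₊ ≤ k := le_trans (le_trans (le_max_right 0 _) (Nat.le_succ _)) hk2
        exact_mod_cast this
      have := neg_abs_le c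
      linarith
    linarith [hgu (φ k)]
  set m := sInf (g '' K) with hm
  have hpick : ∀ k : ℕ, ∃ x ∈ K, g x < m + 1 / (k + 1) := by
    intro k
    have h1 : m < m + 1 / (k + 1) := by
      have : (0:ℝ) < 1 / (k + 1) := by positivity
      linarith
    obtain ⟨v, hv, hv2⟩ := exists_lt_of_csInf_lt (hne.image g) h1
    obtain ⟨x, hx, rfl⟩ := hv
    exact ⟨x, hx, hv2⟩
  choose u hu hgu using hpick
  obtain ⟨y, hyK, φ, hφ, hlim⟩ := hK.tendsto_subseq hu
  refine ⟨y, hyK, fun x hx => ?_⟩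
  have hyx : g y ≤ m := by
    by_contra h
    push_neg at h
    obtain ⟨c, hc1, hc2⟩ := exists_between h
    have := (hlim.eventually (hg y c hc2)).and
      (eventually_atTop.mpr ⟨⌈1 / (c - m)⌉₊, fun b hb => hb⟩)
    obtain ⟨k, hk1, hk2⟩ := this.exists
    simp only [Function.comp_apply] at hk1
    have h3 : g (u (φ k)) < m + 1 / (φ k + 1) := hgu (φ k)
    have hφk : (⌈1 / (c - m)⌉₊ : ℝ) ≤ (φ k : ℝ) := by
      exact_mod_cast le_trans hk2 (hφ.id_le k)
    have h4 : 1 / (c - m) ≤ (φ k : ℝ) := le_trans (Nat.le_ceil _) hφk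
    have h5 : (0:ℝ) < φ k + 1 := by positivity
    have h6 : 1 / ((φ k : ℝ) + 1) < c - m := by
      rw [div_lt_iff₀ h5]
      have hcm : 0 < c - m := by linarith
      have : 1 / (c - m) * (c - m) ≤ (φ k : ℝ) * (c - m) := by
        exact mul_le_mul_of_nonneg_right h4 hcm.le
      rw [one_div_mul_cancel hcm.ne'] at this
      nlinarith
    linarith
  calc g y ≤ m := hyx
    _ ≤ g x := csInf_le hb ⟨x, hx, rfl⟩

/-- Ekeland's variational principle with slope bound: if
f(z) ≤ inf f + ε, then for any ρ > 0 there is y with ‖z − y‖ ≤ ε/ρ, f(y) ≤ f(z),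
and slope of f at y at most ρ. -/
theorem ekeland_with_slope_bound {n : ℕ} (f : En n → ℝ)
    (hlsc : LowerSemicontinuous f) (hbdd : BddBelow (Set.range f))
    (ε ρ : ℝ) (hε : 0 < ε) (hρ : 0 < ρ)
    (z : En n) (hz : f z ≤ (⨅ x, f x) + ε) :
    ∃ y : En n, ‖z - y‖ ≤ ε / ρ ∧ f y ≤ f z ∧
      Filter.limsup (fun x => max (f y - f x) 0 / ‖x - y‖) (nhdsWithin y {y}ᶜ) ≤ ρ := by
  obtain ⟨B, hB⟩ := hbdd
  have hBf : ∀ x, B ≤ f x := fun x => hB ⟨x, rfl⟩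
  set g : En n → ℝ := fun x => f x + ρ * ‖x - z‖ with hg_def
  have hg_lsc : LowerSemicontinuous g :=
    hlsc.add (Continuous.lowerSemicontinuous (by continuity))
  -- sublevel set
  set K : Set (En n) := {x | g x ≤ g z} with hK_def
  have hzK : z ∈ K := by simp [hK_def, hg_def]
  have hK_closed : IsClosed K := hg_lsc.isClosed_preimage (g z)
  have hK_bdd : K ⊆ Metric.closedBall z ((f z - B) / ρ) := by
    intro x hx
    have h1' : g x ≤ g z := hx
    have h1 : f x + ρ * ‖x - z‖ ≤ f z := by simpa [hg_def] using h1'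
    have h2 : ρ * ‖x - z‖ ≤ f z - B := by linarith [hBf x]
    rw [Metric.mem_closedBall, dist_eq_norm]
    rw [le_div_iff₀ hρ]
    linarith
  have hK_compact : IsCompact K :=
    (isCompact_closedBall z _).of_isClosed_subset hK_closed hK_bdd
  obtain ⟨y, hyK, hymin⟩ := lsc_exists_min_on_compact hg_lsc hK_compact ⟨z, hzK⟩
  -- y is a global minimizer of g
  have hglobal : ∀ x, g y ≤ g x := by
    intro x
    by_cases hx : x ∈ K
    · exact hymin x hx
    · have : g z < g x := by simpa [hK_def] using hx
      exact le_trans (hymin z hzK) this.le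
  have hkey : ∀ x, f y - f x ≤ ρ * ‖x - y‖ := by
    intro x
    have h1 : f y + ρ * ‖y - z‖ ≤ f x + ρ * ‖x - z‖ := hglobal x
    have h2 : ‖x - z‖ ≤ ‖x - y‖ + ‖y - z‖ := by
      have := norm_add_le (x - y) (y - z)
      simpa using this
    nlinarith
  have hfy_le : f y ≤ f z := by
    have := hglobal z
    simp only [hg_def, sub_self, norm_zero, mul_zero, add_zero] at this
    nlinarith [norm_nonneg (y - z), hρ.le]
  have hinf_le : (⨅ x, f x) ≤ f y := ciInf_le ⟨B, hB⟩ y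
  have hdist : ‖z - y‖ ≤ ε / ρ := by
    have h1 : f y + ρ * ‖y - z‖ ≤ f z := by
      simpa [hg_def] using hglobal z
    have h2 : ρ * ‖y - z‖ ≤ ε := by linarith
    rw [norm_sub_rev, ← le_div_iff₀' hρ] at h2
    linarith [h2]
  refine ⟨y, hdist, hfy_le, ?_⟩
  have hbound : ∀ x, max (f y - f x) 0 / ‖x - y‖ ≤ ρ := by
    intro x
    by_cases hx : x = y
    · simp [hx, hρ.le]
    · have hn : 0 < ‖x - y‖ := by
        rw [norm_pos_iff, sub_ne_zero]; exact hx
      rw [div_le_iff₀ hn]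
      rcases max_cases (f y - f x) 0 with ⟨h1, h2⟩ | ⟨h1, h2⟩
      · rw [h1]; exact hkey x
      · rw [h1]; positivity
  rcases eq_or_neBot (nhdsWithin y ({y}ᶜ : Set (En n))) with hbot | hnb
  · rw [hbot]
    simp only [Filter.limsup, Filter.limsSup]
    have : {a : ℝ | ∀ᶠ x in Filter.map (fun x => max (f y - f x) 0 / ‖x - y‖) ⊥, x ≤ a}
        = Set.univ := by
      ext a; simp
    rw [this]
    have : ¬ BddBelow (Set.univ : Set ℝ) := by
      simp [bddBelow_def]
      intro a; exact ⟨a - 1, by linarith⟩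
    rw [Real.sInf_of_not_bddBelow this]
    exact hρ.le
  · haveI := hnb
    refine Filter.limsup_le_of_le ?_ ?_
    · exact Filter.isCoboundedUnder_le_of_eventually_le
        (f := fun x => max (f y - f x) 0 / ‖x - y‖) (x := (0:ℝ))
        (nhdsWithin y ({y}ᶜ : Set (En n)))
        (Filter.Eventually.of_forall (fun x => by positivity))
    · filter_upwards with x using hbound x
end
end
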